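/- Let a clause state with bound n (relative to a CNF I and a trail τ) satisfy Inv1, Inv3, and Inv4, and let γ ∈ D∞ be a temporary clause. Then the state obtained by replacing D∞ with D∞ ∖ {γ} satisfies Inv1, Inv2, Inv3, and Inv4; i.e., temporary clauses may be deleted at any time without affecting correctness. -/

import Mathlib

/-- A variable is a natural number. -/
abbrev Var := ℕ

/-- A literal is a pair of a variable and a Boolean polarity. -/
abbrev Lit := Var × Bool

/-- The negation of a literal flips its polarity. -/
def Lit.neg (l : Lit) : Lit := (l.1, !l.2)

/-- A clause is a finite set of literals. -/
abbrev Clause := Finset Lit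

/-- A total assignment. -/
abbrev Assignment := Var → Bool

/-- A trail is a finite list of (literal, decision level) pairs. -/
abbrev Trail := List (Lit × ℕ)

/-- An assignment satisfies a literal `(v, b)` iff it assigns `b` to `v`. -/
def SatLit (σ : Assignment) (l : Lit) : Prop := σ l.1 = l.2

/-- An assignment satisfies a clause iff it satisfies one of its literals. -/
def SatClause (σ : Assignment) (c : Clause) : Prop := ∃ l ∈ c, SatLit σ l

/-- An assignment satisfies a set of clauses iff it satisfies every clause in it. -/
def SatSet (σ : Assignment) (Γ : Set Clause) : Prop := ∀ c ∈ Γ, SatClause σ c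

/-- Entry `i` of trail `τ` is a decision: its level is positive and
no earlier entry has the same level. -/
def IsDecision (τ : Trail) (i : Fin τ.length) : Prop :=
  0 < (τ.get i).2 ∧ ∀ j : Fin τ.length, j < i → (τ.get j).2 ≠ (τ.get i).2

/-- `τ` is a trail for the input CNF `I`. -/
structure IsTrail (I : Finset Clause) (τ : Trail) : Prop where
  nodupVars : (τ.map (fun e => e.1.1)).Nodup
  levelsMono : (τ.map Prod.snd).Pairwise (· ≤ ·)
  implied : ∀ i : Fin τ.length, ¬ IsDecision τ i →
    ∀ σ : Assignment, SatSet σ ↑I →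
      (∀ j : Fin τ.length, j < i → IsDecision τ j → SatLit σ (τ.get j).1) →
      SatLit σ (τ.get i).1

/-- `τ^{≤d}`: the longest prefix of `τ` whose entries all have level `≤ d`. -/
def Trail.upTo (τ : Trail) (d : ℕ) : Trail := τ.takeWhile (fun e => e.2 ≤ d)

/-- An assignment satisfies (the literal of) every entry of a trail. -/
def SatTrail (σ : Assignment) (τ : Trail) : Prop := ∀ e ∈ τ, SatLit σ e.1

/-- `Γ →^d Δ` relative to `τ`. -/
def ImpliesAt (τ : Trail) (d : ℕ) (Γ Δ : Set Clause) : Prop :=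
  ∀ σ : Assignment, SatTrail σ (τ.upTo d) → SatSet σ Γ → SatSet σ Δ

/-- `Γ ↔^d Δ` relative to `τ`. -/
def EquivAt (τ : Trail) (d : ℕ) (Γ Δ : Set Clause) : Prop :=
  ImpliesAt τ d Γ Δ ∧ ImpliesAt τ d Δ Γ

/-- `α^{≤d}`: literals of `α` whose negation is not the literal of any entry of `τ^{≤d}`. -/
def Clause.upTo (τ : Trail) (d : ℕ) (α : Clause) : Clause :=
  α.filter (fun l => ∀ e ∈ τ.upTo d, e.1 ≠ Lit.neg l)

/-- `α` d-subsumes `β` (relative to `τ`). -/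
def SubsumesAt (τ : Trail) (d : ℕ) (α β : Clause) : Prop :=
  Clause.upTo τ d α ⊆ Clause.upTo τ d β

/-- `α` min-k-subsumes `β` (relative to `τ`). -/
def MinSubsumesAt (τ : Trail) (k : ℕ) (α β : Clause) : Prop :=
  SubsumesAt τ k α β ∧ ∀ d' < k, ¬ SubsumesAt τ d' α β

/-- `α` and `β` are resolvable on `x`. -/
def Resolvable (α β : Clause) (x : Var) : Prop := (x, true) ∈ α ∧ (x, false) ∈ β

/-- The resolveOn `α ⊗ₓ β`. -/
def resolveOn (α β : Clause) (x : Var) : Clause := α.erase (x, true) ∪ β.erase (x, false)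

/-- A clause state: groups `Dᵢ` (meaningful for `i ≤ n`), temporary clauses `D∞`,
and stashed groups `Sᵢ^q` (meaningful for `q < i ≤ n`). -/
structure ClauseState where
  D : ℕ → Set Clause
  Dinf : Set Clause
  Stash : ℕ → ℕ → Set Clause

/-- `Sᵢ := ⋃_{q<i} Sᵢ^q`. -/
def ClauseState.Sl (st : ClauseState) (i : ℕ) : Set Clause :=
  {α | ∃ q < i, α ∈ st.Stash i q}

/-- `S := ⋃_{1≤i≤n} Sᵢ`. -/
def ClauseState.Sall (st : ClauseState) (n : ℕ) : Set Clause :=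
  {α | ∃ i, 1 ≤ i ∧ i ≤ n ∧ α ∈ st.Sl i}

/-- `S⁰ := ⋃_{0<i≤n} Sᵢ^0`. -/
def ClauseState.S0 (st : ClauseState) (n : ℕ) : Set Clause :=
  {α | ∃ i, 0 < i ∧ i ≤ n ∧ α ∈ st.Stash i 0}

/-- The pervasive clauses `P := D₀ ∪ S⁰`. -/
def ClauseState.P (st : ClauseState) (n : ℕ) : Set Clause := st.D 0 ∪ st.S0 n

/-- The active-non-temporary clauses `N := ⋃_{0≤i≤n} Dᵢ`. -/
def ClauseState.N (st : ClauseState) (n : ℕ) : Set Clause := {α | ∃ i ≤ n, α ∈ st.D i}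

/-- The active clauses `A := N ∪ D∞`. -/
def ClauseState.A (st : ClauseState) (n : ℕ) : Set Clause := st.N n ∪ st.Dinf

/-- Inv1 (input-equivalence): `I ↔⁰ P`. -/
def Inv1 (I : Finset Clause) (τ : Trail) (st : ClauseState) (n : ℕ) : Prop :=
  EquivAt τ 0 ↑I (st.P n)

/-- Inv2 (correctness): `N ↔ⁿ P`. -/
def Inv2 (τ : Trail) (st : ClauseState) (n : ℕ) : Prop :=
  EquivAt τ n (st.N n) (st.P n)

/-- The representation condition on a clause `α` stashed at level `i`. -/
def Represented (τ : Trail) (st : ClauseState) (n i : ℕ) (α : Clause) : Prop :=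
  (∃ r ≤ i, ∃ β ∈ st.D r, ImpliesAt τ i {β} {α}) ∨
  (∃ r ≤ i, ∃ j, i < j ∧ j ≤ n ∧ ∃ β ∈ st.Stash j r, ImpliesAt τ i {β} {α}) ∨
  ImpliesAt τ i ∅ {α}

/-- Inv3 (representation). -/
def Inv3 (τ : Trail) (st : ClauseState) (n : ℕ) : Prop :=
  ∀ i, 1 ≤ i → i ≤ n → ∀ α ∈ st.Sl i, Represented τ st n i α

/-- Inv4 (closure): every active or stashed clause is 0-implied by `P`. -/
def Inv4 (τ : Trail) (st : ClauseState) (n : ℕ) : Prop :=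
  ∀ γ ∈ st.A n ∪ st.Sall n, ImpliesAt τ 0 (st.P n) {γ}

/-- All four BI invariants. -/
def Invs (I : Finset Clause) (τ : Trail) (st : ClauseState) (n : ℕ) : Prop :=
  Inv1 I τ st n ∧ Inv2 τ st n ∧ Inv3 τ st n ∧ Inv4 τ st n


lemma mem_upTo_mono {τ : Trail} {i n : ℕ} (h : i ≤ n) :
    ∀ e ∈ τ.upTo i, e ∈ τ.upTo n := by
  induction τ with
  | nil => intro e he; exact he
  | cons a t ih =>
    intro e he
    unfold Trail.upTo List.takeWhile at he ⊢
    by_cases ha : a.2 ≤ i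
    · simp [ha, le_trans ha h] at he ⊢
      rcases he with he | he
      · exact Or.inl he
      · exact Or.inr (ih e he)
    · simp [ha] at he

lemma satTrail_mono {σ : Assignment} {τ : Trail} {i n : ℕ} (h : i ≤ n)
    (hs : SatTrail σ (τ.upTo n)) : SatTrail σ (τ.upTo i) :=
  fun e he => hs e (mem_upTo_mono h e he)

lemma impliesAt_mono {τ : Trail} {i n : ℕ} {Γ Δ : Set Clause} (h : i ≤ n)
    (hi : ImpliesAt τ i Γ Δ) : ImpliesAt τ n Γ Δ :=
  fun σ hs hΓ => hi σ (satTrail_mono h hs) hΓ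

lemma key_lemma (τ : Trail) (st : ClauseState) (n : ℕ) (h3 : Inv3 τ st n) :
    ∀ k i, n - i ≤ k → 1 ≤ i → i ≤ n → ∀ α ∈ st.Sl i, ImpliesAt τ n (st.N n) {α} := by
  intro k
  induction k with
  | zero =>
    intro i hk h1 hn α hα
    rcases h3 i h1 hn α hα with ⟨r, hr, β, hβ, himp⟩ | ⟨r, hr, j, hij, hjn, β, hβ, himp⟩ | himp
    · intro σ hs hΓ c hc
      apply impliesAt_mono hn himp σ hs
      · intro c' hc'; rw [Set.mem_singleton_iff] at hc'; subst hc'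
        exact hΓ c' ⟨r, le_trans hr hn, hβ⟩
      · exact hc
    · omega
    · intro σ hs hΓ c hc
      exact impliesAt_mono hn himp σ hs (fun c' hc' => absurd hc' (Set.notMem_empty c')) c hc
  | succ k ih =>
    intro i hk h1 hn α hα
    rcases h3 i h1 hn α hα with ⟨r, hr, β, hβ, himp⟩ | ⟨r, hr, j, hij, hjn, β, hβ, himp⟩ | himp
    · intro σ hs hΓ c hc
      apply impliesAt_mono hn himp σ hs
      · intro c' hc'; rw [Set.mem_singleton_iff] at hc'; subst hc'
        exact hΓ c' ⟨r, le_trans hr hn, hβ⟩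
      · exact hc
    · have hβSl : β ∈ st.Sl j := ⟨r, by omega, hβ⟩
      have hNβ : ImpliesAt τ n (st.N n) {β} := ih j (by omega) (by omega) hjn β hβSl
      intro σ hs hΓ c hc
      apply impliesAt_mono hn himp σ hs
      · intro c' hc'; rw [Set.mem_singleton_iff] at hc'; subst hc'
        exact hNβ σ hs hΓ c' rfl
      · exact hc
    · intro σ hs hΓ c hc
      exact impliesAt_mono hn himp σ hs (fun c' hc' => absurd hc' (Set.notMem_empty c')) c hc

/-- deleting a temporary clause `γ ∈ D∞` preserves all BI invariants. -/
theorem stmt11 (I : Finset Clause) (τ : Trail) (hτ : IsTrail I τ)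
    (st : ClauseState) (n : ℕ)
    (h1 : Inv1 I τ st n) (h3 : Inv3 τ st n) (h4 : Inv4 τ st n)
    (γ : Clause) (hγ : γ ∈ st.Dinf) :
    Invs I τ { st with Dinf := st.Dinf \ {γ} } n := by
  set st' : ClauseState := { st with Dinf := st.Dinf \ {γ} } with hst'
  have hP : st'.P n = st.P n := rfl
  have hN : st'.N n = st.N n := rfl
  have hSl : ∀ i, st'.Sl i = st.Sl i := fun _ => rfl
  have hSall : st'.Sall n = st.Sall n := rfl
  refine ⟨h1, ?_, ?_, ?_⟩
  · -- Inv2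
    constructor
    · -- N →ⁿ P
      intro σ hs hΓ c hc
      rcases hc with hc | ⟨i, hi0, hin, hc⟩
      · exact hΓ c ⟨0, Nat.zero_le n, hc⟩
      · have : c ∈ st.Sl i := ⟨0, hi0, hc⟩
        exact key_lemma τ st n h3 (n - i) i le_rfl hi0 hin c this σ hs hΓ c rfl
    · -- P →ⁿ N
      intro σ hs hΓ c hc
      rcases hc with ⟨i, hin, hc⟩
      have hmem : c ∈ st.A n ∪ st.Sall n := Or.inl (Or.inl ⟨i, hin, hc⟩)
      exact impliesAt_mono (Nat.zero_le n) (h4 c hmem) σ hs hΓ c rfl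
  · -- Inv3
    intro i h1i hin α hα
    rcases h3 i h1i hin α hα with h | h | h
    · exact Or.inl h
    · exact Or.inr (Or.inl h)
    · exact Or.inr (Or.inr h)
  · -- Inv4
    intro c hc
    apply h4
    rcases hc with (hc | hc) | hc
    · exact Or.inl (Or.inl hc)
    · exact Or.inl (Or.inr hc.1)
    · exact Or.inr hc
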